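/- Fix a positive integer d and γ ∈ [0,1). Let w ∈ ℝ^d have all entries strictly positive, let P be a d×d real matrix with nonnegative entries each of whose columns sums to 1, and let φ₀ ∈ ℝ^d. Set Σ := diag(w), Σcr := Σ·Pᵀ, and A := Σ − γ·Σcr. Then I − γ·P and A are invertible, and with ν := (1−γ)·(I − γ·P)⁻¹·φ₀, the feature-dynamics coverage satisfies (1−γ)²·φ₀ᵀ·A⁻¹·Σ·A⁻ᵀ·φ₀ = Σᵢ νᵢ² / wᵢ. -/

import Mathlib

/-!
With `B = 1 - γ • P`, the matrix `A` factors as `diag w * Bᵀ`, so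
`A⁻¹ * diag w * A⁻ᵀ = B⁻ᵀ * (diag w)⁻¹ * B⁻¹` and the coverage is the `(diag w)⁻¹`-weighted
squared norm of `B⁻¹ φ₀ = ν / (1 - γ)`. `B` is invertible because a column-stochastic matrix
does not increase the `ℓ¹` norm, so a vector with `v = γ • P v` has `‖v‖₁ ≤ |γ| ‖v‖₁`.
-/

open Matrix MeasureTheory ProbabilityTheory
open scoped Classical

noncomputable section

/-- Euclidean norm of a vector in `ℝ^d`. -/
def norm2 {d : ℕ} (v : Fin d → ℝ) : ℝ := Real.sqrt (v ⬝ᵥ v)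

/-- The positive semidefinite square root of a matrix (junk value `0` if not PSD). -/
def psdSqrt {d : ℕ} (M : Matrix (Fin d) (Fin d) ℝ) : Matrix (Fin d) (Fin d) ℝ :=
  if h : M.PosSemidef then
    (h.1.eigenvectorUnitary : Matrix (Fin d) (Fin d) ℝ) *
      diagonal ((↑) ∘ Real.sqrt ∘ h.1.eigenvalues) *
      (star h.1.eigenvectorUnitary : Matrix (Fin d) (Fin d) ℝ) else 0

/-- Largest eigenvalue of a symmetric matrix (junk value `0` if not symmetric). -/
def lamMax {d : ℕ} (M : Matrix (Fin d) (Fin d) ℝ) : ℝ :=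
  if h : M.IsHermitian then ⨆ i, h.eigenvalues i else 0

/-- Smallest eigenvalue of a symmetric matrix (junk value `0` if not symmetric). -/
def lamMin {d : ℕ} (M : Matrix (Fin d) (Fin d) ℝ) : ℝ :=
  if h : M.IsHermitian then ⨅ i, h.eigenvalues i else 0

/-- Smallest singular value. -/
def sigmaMin {d : ℕ} (M : Matrix (Fin d) (Fin d) ℝ) : ℝ := Real.sqrt (lamMin (Mᵀ * M))

/-- Largest singular value (operator norm). -/
def sigmaMax {d : ℕ} (M : Matrix (Fin d) (Fin d) ℝ) : ℝ := Real.sqrt (lamMax (Mᵀ * M))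

/-- Empirical covariance matrix `(1/n) ∑ᵢ WᵢWᵢᵀ`. -/
def empSigma {d n : ℕ} (W : Fin n → Fin d → ℝ) : Matrix (Fin d) (Fin d) ℝ :=
  (n : ℝ)⁻¹ • ∑ i, vecMulVec (W i) (W i)

/-- Empirical LSTDQ matrix `(1/n) ∑ᵢ Wᵢ(Wᵢ - γWᵢ')ᵀ`. -/
def empA {d n : ℕ} (γ : ℝ) (W W' : Fin n → Fin d → ℝ) : Matrix (Fin d) (Fin d) ℝ :=
  (n : ℝ)⁻¹ • ∑ i, vecMulVec (W i) (W i - γ • W' i)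

/-- Empirical LSTDQ vector `(1/n) ∑ᵢ RᵢWᵢ`. -/
def empb {d n : ℕ} (W : Fin n → Fin d → ℝ) (R : Fin n → ℝ) : Fin d → ℝ :=
  (n : ℝ)⁻¹ • ∑ i, R i • W i

namespace Matrix

variable {R n : Type*} [Fintype n]

section Stochastic

variable [Field R] [LinearOrder R] [IsStrictOrderedRing R] {M : Matrix n n R}

lemma abs_mulVec_le_mulVec_abs (hM : ∀ i j, 0 ≤ M i j) (x : n → R) (i : n) :
    |(M *ᵥ x) i| ≤ (M *ᵥ fun j => |x j|) i :=
  (Finset.abs_sum_le_sum_abs _ _).trans_eq <|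
    Finset.sum_congr rfl fun j _ => by rw [abs_mul, abs_of_nonneg (hM i j)]

variable [DecidableEq n]

lemma sum_abs_mulVec_le_of_mem_colStochastic (hM : M ∈ colStochastic R n) (x : n → R) :
    ∑ i, |(M *ᵥ x) i| ≤ ∑ i, |x i| :=
  calc ∑ i, |(M *ᵥ x) i| ≤ ∑ i, (M *ᵥ fun j => |x j|) i :=
        Finset.sum_le_sum fun i _ => abs_mulVec_le_mulVec_abs hM.1 x i
    _ = ∑ i, |x i| := sum_mulVec_of_mem_colStochastic hM

lemma isUnit_det_one_sub_smul_of_mem_colStochastic {γ : R} (hγ : |γ| < 1)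
    (hM : M ∈ colStochastic R n) : IsUnit (1 - γ • M).det := by
  rw [isUnit_iff_ne_zero]
  intro hdet
  obtain ⟨v, hv0, hv⟩ := exists_mulVec_eq_zero_iff.mpr hdet
  have hfix : v = γ • (M *ᵥ v) := by
    rwa [sub_mulVec, one_mulVec, smul_mulVec, sub_eq_zero] at hv
  have hpos : 0 < ∑ i, |v i| := by
    obtain ⟨i, hi⟩ := Function.ne_iff.mp hv0
    exact Finset.sum_pos' (fun j _ => abs_nonneg _) ⟨i, Finset.mem_univ i, abs_pos.mpr hi⟩
  have hcontract : ∑ i, |v i| ≤ |γ| * ∑ i, |v i| :=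
    calc ∑ i, |v i| = |γ| * ∑ i, |(M *ᵥ v) i| := by
          conv_lhs => rw [hfix]
          simp only [Pi.smul_apply, smul_eq_mul, abs_mul, Finset.mul_sum]
      _ ≤ |γ| * ∑ i, |v i| :=
          mul_le_mul_of_nonneg_left (sum_abs_mulVec_le_of_mem_colStochastic hM v) (abs_nonneg γ)
  nlinarith

end Stochastic

section Sandwich

variable [DecidableEq n] [Field R]

lemma inv_diagonal_of_ne_zero {w : n → R} (hw : ∀ i, w i ≠ 0) :
    (diagonal w)⁻¹ = diagonal w⁻¹ :=
  inv_eq_right_inv <| by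
    rw [diagonal_mul_diagonal, ← diagonal_one]
    exact congrArg diagonal (funext fun i => mul_inv_cancel₀ (hw i))

lemma dotProduct_inv_diagonal_mulVec {w : n → R} (hw : ∀ i, w i ≠ 0) (u : n → R) :
    u ⬝ᵥ ((diagonal w)⁻¹ *ᵥ u) = ∑ i, u i ^ 2 / w i := by
  simp only [inv_diagonal_of_ne_zero hw, mulVec_diagonal, dotProduct, Pi.inv_apply]
  exact Finset.sum_congr rfl fun i _ => by ring

lemma dotProduct_inv_mulVec_sandwich {D : Matrix n n R} (hD : Dᵀ = D) (hDdet : IsUnit D.det)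
    (B : Matrix n n R) (x : n → R) :
    x ⬝ᵥ ((D * Bᵀ)⁻¹ *ᵥ (D *ᵥ ((D * Bᵀ)⁻¹ᵀ *ᵥ x))) =
      (B⁻¹ *ᵥ x) ⬝ᵥ (D⁻¹ *ᵥ (B⁻¹ *ᵥ x)) := by
  have hinv : (D * Bᵀ)⁻¹ = B⁻¹ᵀ * D⁻¹ := by
    rw [mul_inv_rev, transpose_nonsing_inv]
  have hinvT : (D * Bᵀ)⁻¹ᵀ = D⁻¹ * B⁻¹ := by
    rw [hinv, transpose_mul, transpose_transpose, transpose_nonsing_inv, hD]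
  rw [hinvT, hinv, mulVec_mulVec _ D, mul_nonsing_inv_cancel_left (A := D) B⁻¹ hDdet,
    ← mulVec_mulVec, dotProduct_mulVec, vecMul_transpose]

end Sandwich

end Matrix

theorem stmt10_general (d : ℕ) (γ : ℝ) (hγ0 : 0 ≤ γ) (hγ1 : γ < 1)
    (w : Fin d → ℝ) (hw : ∀ i, 0 < w i)
    (P : Matrix (Fin d) (Fin d) ℝ) (hP : ∀ i j, 0 ≤ P i j) (hPcol : ∀ j, ∑ i, P i j = 1)
    (φ₀ : Fin d → ℝ) :
    IsUnit ((1 : Matrix (Fin d) (Fin d) ℝ) - γ • P).det ∧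
      IsUnit (Matrix.diagonal w - γ • (Matrix.diagonal w * Pᵀ)).det ∧
      (let A : Matrix (Fin d) (Fin d) ℝ := Matrix.diagonal w - γ • (Matrix.diagonal w * Pᵀ)
       let ν : Fin d → ℝ := (1 - γ) • (((1 : Matrix (Fin d) (Fin d) ℝ) - γ • P)⁻¹ *ᵥ φ₀)
       (1 - γ) ^ 2 * (φ₀ ⬝ᵥ (A⁻¹ *ᵥ (Matrix.diagonal w *ᵥ ((A⁻¹)ᵀ *ᵥ φ₀)))) =
        ∑ i, ν i ^ 2 / w i) := by
  have hB : IsUnit ((1 : Matrix (Fin d) (Fin d) ℝ) - γ • P).det :=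
    isUnit_det_one_sub_smul_of_mem_colStochastic (abs_lt.2 ⟨by linarith, hγ1⟩)
      (mem_colStochastic_iff_sum.2 ⟨hP, hPcol⟩)
  have hw0 : ∀ i, w i ≠ 0 := fun i => (hw i).ne'
  have hD : IsUnit (diagonal w).det := by
    rw [det_diagonal]
    exact (Finset.prod_ne_zero_iff.2 fun i _ => hw0 i).isUnit
  have hA : diagonal w - γ • (diagonal w * Pᵀ) = diagonal w * (1 - γ • P)ᵀ := by
    rw [transpose_sub, transpose_one, transpose_smul, mul_sub, mul_one, Matrix.mul_smul]
  refine ⟨hB, by rw [hA, det_mul, det_transpose]; exact hD.mul hB, ?_⟩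
  intro A ν
  rw [show A = _ from hA, dotProduct_inv_mulVec_sandwich (diagonal_transpose w) hD,
    dotProduct_inv_diagonal_mulVec hw0, Finset.mul_sum]
  refine Finset.sum_congr rfl fun i _ => ?_
  simp only [ν, Pi.smul_apply, smul_eq_mul]
  ring

/-- matrix form of Proposition 5.5 of the paper: in the tabular /
state-aggregation case with `Σ = diag(w)` and a column-stochastic `P`, the feature-dynamics
coverage equals the χ²-type aggregated concentrability `∑ᵢ νᵢ²/wᵢ`. -/
theorem stmt10 (d : ℕ) (hd : 0 < d) (γ : ℝ) (hγ0 : 0 ≤ γ) (hγ1 : γ < 1)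
    (w : Fin d → ℝ) (hw : ∀ i, 0 < w i)
    (P : Matrix (Fin d) (Fin d) ℝ) (hP : ∀ i j, 0 ≤ P i j) (hPcol : ∀ j, ∑ i, P i j = 1)
    (φ₀ : Fin d → ℝ) :
    IsUnit ((1 : Matrix (Fin d) (Fin d) ℝ) - γ • P).det ∧
      IsUnit (Matrix.diagonal w - γ • (Matrix.diagonal w * Pᵀ)).det ∧
      (let A : Matrix (Fin d) (Fin d) ℝ := Matrix.diagonal w - γ • (Matrix.diagonal w * Pᵀ)
       let ν : Fin d → ℝ := (1 - γ) • (((1 : Matrix (Fin d) (Fin d) ℝ) - γ • P)⁻¹ *ᵥ φ₀)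
       (1 - γ) ^ 2 * (φ₀ ⬝ᵥ (A⁻¹ *ᵥ (Matrix.diagonal w *ᵥ ((A⁻¹)ᵀ *ᵥ φ₀)))) =
        ∑ i, ν i ^ 2 / w i) :=
  stmt10_general d γ hγ0 hγ1 w hw P hP hPcol φ₀

end
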